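/- For the strong matrix Stieltjes moment problem with moments $S_n$ satisfying the positivity conditions, the closed shift operator $A$ constructed from the moment sequence has deficiency indices $(n,n)$ with $0 \leq n \leq N$. More precisely: every element $u$ of the linear span $L$ of $\{x_k\}_{k\in\mathbb{Z}}$ admits a decomposition $u = u_z + u_0$ where $u_z \in (A - zE_H)D(A)$ and $u_0 \in \mathrm{Lin}\{x_0, \dots, x_{N-1}\}$, for every fixed $z \in \mathbb{C}\setminus\mathbb{R}$. -/
import Mathlib


/-- every element `u` of the linear span `L` of `{x_k}` decomposes as
`u = u_z + u₀` with `u_z ∈ (A - zE)D(A)` and `u₀ ∈ Lin{x₀,…,x_{N-1}}`, for each fixed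
non-real `z` — the key step showing the shift operator `A` (with `A x_k = x_{k+N}`)
has deficiency indices `(n,n)`, `0 ≤ n ≤ N`. -/
theorem stmt17 {H : Type*} [NormedAddCommGroup H] [InnerProductSpace ℂ H]
    [CompleteSpace H]
    (x : ℤ → H) (N : ℕ) (hN : 0 < N)
    (DA : Submodule ℂ H) (hxD : ∀ k : ℤ, x k ∈ DA)
    (A : DA →ₗ[ℂ] H) (hA : ∀ k : ℤ, A ⟨x k, hxD k⟩ = x (k + N))
    (z : ℂ) (hz : z.im ≠ 0)
    (u : H) (hu : u ∈ Submodule.span ℂ (Set.range x)) :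
    ∃ (d : DA) (w : H),
      w ∈ Submodule.span ℂ (Set.range fun k : Fin N => x (k : ℤ)) ∧
      u = (A d - z • (d : H)) + w := by
  have hz0 : z ≠ 0 := fun h => hz (by simp [h])
  set T : DA →ₗ[ℂ] H := A - z • DA.subtype with hT
  set W : Submodule ℂ H := Submodule.span ℂ (Set.range fun k : Fin N => x (k : ℤ)) with hW
  set S : Submodule ℂ H := LinearMap.range T ⊔ W with hS
  have hTx : ∀ k : ℤ, T ⟨x k, hxD k⟩ = x (k + N) - z • x k := by
    intro k
    simp [hT, hA k]
  have hbase : ∀ k : ℤ, 0 ≤ k → k < N → x k ∈ S := by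
    intro k h1 h2
    apply Submodule.mem_sup_right
    apply Submodule.subset_span
    exact ⟨⟨k.toNat, by omega⟩, by simp; congr 1; omega⟩
  have hup : ∀ k : ℤ, x k ∈ S → x (k + N) ∈ S := by
    intro k hk
    have h : x (k + N) = T ⟨x k, hxD k⟩ + z • x k := by rw [hTx]; abel
    rw [h]
    exact S.add_mem (Submodule.mem_sup_left ⟨_, rfl⟩) (S.smul_mem _ hk)
  have hdown : ∀ k : ℤ, x (k + N) ∈ S → x k ∈ S := by
    intro k hk
    have h : x k = z⁻¹ • (x (k + N) - T ⟨x k, hxD k⟩) := by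
      rw [hTx, sub_sub_cancel, smul_smul, inv_mul_cancel₀ hz0, one_smul]
    rw [h]
    exact S.smul_mem _ (S.sub_mem hk (Submodule.mem_sup_left ⟨_, rfl⟩))
  have hnn : ∀ n : ℕ, x (n : ℤ) ∈ S := by
    intro n
    induction n using Nat.strong_induction_on with
    | _ n ih =>
      by_cases h : n < N
      · exact hbase n (Int.ofNat_nonneg n) (by exact_mod_cast h)
      · have h1 := hup ((n - N : ℕ) : ℤ) (ih (n - N) (by omega))
        have h2 : ((n - N : ℕ) : ℤ) + N = n := by omega
        rwa [h2] at h1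
  have hall : ∀ n : ℕ, ∀ k : ℤ, -(n : ℤ) ≤ k → x k ∈ S := by
    intro n
    induction n with
    | zero =>
      intro k hk
      lift k to ℕ using (by omega) with m
      exact hnn m
    | succ n ih =>
      intro k hk
      rcases le_or_gt 0 k with h | h
      · lift k to ℕ using h with m
        exact hnn m
      · exact hdown k (ih (k + N) (by omega))
  have hu' : u ∈ S := by
    refine Submodule.span_le.mpr ?_ hu
    rintro _ ⟨k, rfl⟩
    exact hall k.natAbs k (by omega)
  rcases Submodule.mem_sup.mp hu' with ⟨a, ⟨d, rfl⟩, w, hw, h⟩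
  exact ⟨d, w, hw, by rw [← h]; simp [hT]⟩
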